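/- arXiv:2408.01052 — 8 statements merged into one kernel-verified Lean document; each statement's English description precedes it below -/
import Mathlib

section
/- Let n be even, a > b, gcd(n, a−b) = 1, and let f : F₂ⁿ → F₂ⁿ be defined by f(x) = (Sᵃ(x) ∧ Sᵇ(x)) ⊕ Sᶜ(x). Let α = 1ⁿ (the all-ones vector) and β ∈ F₂ⁿ, and set γ = β ⊕ Sᶜ(α). If wt(γ) ≡ 0 (mod 2), then the differential probability Pr(α →f β) = #{x ∈ F₂ⁿ : f(x) ⊕ f(x ⊕ α) = β} / 2ⁿ equals 2^{−n+1}. -/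
/-- Circular left shift by `t` bits: `(rotL n t x) i = x ((i + t) % n)`. -/
def rotL (n t : ℕ) (x : Fin n → Bool) : Fin n → Bool :=
  fun i => x ⟨(i.val + t) % n, Nat.mod_lt _ i.pos⟩

/-- Hamming weight of an `n`-bit vector. -/
def hw {n : ℕ} (x : Fin n → Bool) : ℕ :=
  (Finset.univ.filter fun i => x i = true).card

/-- Differential probability `Pr(α →f β) = #{x : f(x) ⊕ f(x ⊕ α) = β} / 2^n`. -/
noncomputable def diffProb (n : ℕ) (f : (Fin n → Bool) → Fin n → Bool)
    (α β : Fin n → Bool) : ℚ :=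
  ((Finset.univ.filter fun x : Fin n → Bool =>
      (fun i => xor (f x i) (f (fun j => xor (x j) (α j)) i)) = β).card : ℚ) / 2 ^ n


/-! Bit vectors are added with the `BooleanRing` structure of `Bool`, so `+` is `xor`.
Since `(p ∧ q) ⊕ (¬p ∧ ¬q) = p ⊕ q ⊕ 1`, the difference `f x ⊕ f (x ⊕ 1ⁿ)` is the additive map
`L x = Sᵃx ⊕ Sᵇx`, and the count is the size of a fibre of `L`. A vector in the kernel of `L` is
periodic with period `a - b`, which generates `ℤ/n`, so the kernel is `{0ⁿ, 1ⁿ}`. The image of `L`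
lies in the even-weight vectors, because rotations preserve parity, and both have `2ⁿ⁻¹` elements,
so they coincide. For even `n` the vector `β` has the parity of `γ`, so it is in the image and its
fibre has two elements. -/

open Finset Function
open scoped Fin.CommRing

instance : CharP Bool 2 := (CharP.charP_iff_prime_eq_zero Nat.prime_two).mpr rfl

lemma Finset.sum_bool_eq_natCast_card {ι : Type*} (s : Finset ι) (x : ι → Bool) :
    ∑ i ∈ s, x i = (#{i ∈ s | x i = true} : Bool) := by
  rw [← Finset.sum_boole]
  exact sum_congr rfl fun i _ => by cases x i <;> rfl

variable {n : ℕ}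

lemma rotL_apply [NeZero n] (t : ℕ) (x : Fin n → Bool) (i : Fin n) :
    rotL n t x i = x (i + (t : Fin n)) := by
  simp only [rotL, Fin.add_def, Fin.val_natCast, Nat.add_mod_mod]

def parity (n : ℕ) : (Fin n → Bool) →+ Bool where
  toFun x := ∑ i, x i
  map_zero' := sum_const_zero
  map_add' _ _ := sum_add_distrib

lemma parity_eq_zero_iff (x : Fin n → Bool) : parity n x = 0 ↔ hw x % 2 = 0 := by
  rw [← Nat.dvd_iff_mod_eq_zero, ← CharP.cast_eq_zero_iff Bool 2]
  exact Eq.congr_left (sum_bool_eq_natCast_card univ x)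

lemma parity_rotL [NeZero n] (t : ℕ) (x : Fin n → Bool) : parity n (rotL n t x) = parity n x := by
  simp only [parity, AddMonoidHom.coe_mk, ZeroHom.coe_mk, rotL_apply]
  exact Equiv.sum_comp (Equiv.addRight (t : Fin n)) x

lemma parity_const_true (hn : Even n) : parity n (fun _ => true) = 0 := by
  rw [parity_eq_zero_iff]
  simp [hw, Nat.even_iff.mp hn]

lemma Function.Periodic.eq_of_coprime {α : Type*} [NeZero n] {x : Fin n → α} {d : ℕ}
    (hx : Periodic x (d : Fin n)) (hd : d.Coprime n) (i j : Fin n) : x i = x j := by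
  have hunit : (((d : ZMod n)⁻¹.val : ℕ) : Fin n) * (d : Fin n) = 1 := by
    have := congrArg (ZMod.finEquiv n).symm (ZMod.val_inv_mul hd)
    rwa [map_mul, map_natCast, map_natCast, map_one] at this
  have hone : Periodic x 1 := hunit ▸ hx.nat_mul _
  rw [← Fin.cast_val_eq_self i, ← Fin.cast_val_eq_self j, ← mul_one (i.val : Fin n),
    ← mul_one (j.val : Fin n), hone.nat_mul_eq, hone.nat_mul_eq]

def rotXor (n a b : ℕ) : (Fin n → Bool) →+ (Fin n → Bool) where
  toFun x := rotL n a x + rotL n b x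
  map_zero' := rfl
  map_add' _ _ := add_add_add_comm _ _ _ _

lemma parity_rotXor [NeZero n] (a b : ℕ) (x : Fin n → Bool) : parity n (rotXor n a b x) = 0 := by
  change parity n (rotL n a x + rotL n b x) = 0
  rw [map_add, parity_rotL, parity_rotL, BooleanRing.add_self]

lemma periodic_of_rotXor_eq_zero [NeZero n] {a b : ℕ} (hab : b ≤ a) {x : Fin n → Bool}
    (hx : rotXor n a b x = 0) : Periodic x ((a - b : ℕ) : Fin n) := by
  intro i
  have h := congrFun hx (i - (b : Fin n))
  change rotL n a x _ + rotL n b x _ = 0 at h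
  rwa [rotL_apply, rotL_apply, BooleanRing.add_eq_zero', sub_add_cancel, sub_add_eq_add_sub,
    add_sub_assoc, ← Nat.cast_sub hab] at h

lemma coe_ker_rotXor [NeZero n] {a b : ℕ} (hab : b ≤ a) (hgcd : Nat.gcd n (a - b) = 1) :
    ((rotXor n a b).ker : Set (Fin n → Bool)) = Set.range (const (Fin n)) := by
  ext x
  simp only [SetLike.mem_coe, AddMonoidHom.mem_ker, Set.mem_range]
  constructor
  · intro hx
    have hper := periodic_of_rotXor_eq_zero hab hx
    exact ⟨x 0, funext fun i => hper.eq_of_coprime (Nat.coprime_comm.mp hgcd) 0 i⟩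
  · rintro ⟨c, rfl⟩
    exact funext fun _ => BooleanRing.add_self c

lemma card_ker_rotXor [NeZero n] {a b : ℕ} (hab : b ≤ a) (hgcd : Nat.gcd n (a - b) = 1) :
    Nat.card (rotXor n a b).ker = 2 := by
  rw [← SetLike.coe_sort_coe, coe_ker_rotXor hab hgcd, Nat.card_range_of_injective const_injective,
    Nat.card_eq_fintype_card, Fintype.card_bool]

lemma AddMonoidHom.card_ker_mul_card_range {G H : Type*} [AddGroup G] [AddGroup H] (φ : G →+ H) :
    Nat.card φ.ker * Nat.card φ.range = Nat.card G := by
  rw [← AddSubgroup.index_ker, AddSubgroup.card_mul_index]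

lemma parity_surjective [NeZero n] : Surjective (parity n) := by
  intro c
  refine ⟨Pi.single 0 c, ?_⟩
  simp [parity]

lemma range_rotXor [NeZero n] {a b : ℕ} (hab : b ≤ a) (hgcd : Nat.gcd n (a - b) = 1) :
    (rotXor n a b).range = (parity n).ker := by
  refine AddSubgroup.eq_of_le_of_card_ge ?_ (le_of_eq ?_)
  · rintro _ ⟨x, rfl⟩
    exact parity_rotXor a b x
  · have hL := (rotXor n a b).card_ker_mul_card_range
    have hP := (parity n).card_ker_mul_card_range
    rw [card_ker_rotXor hab hgcd] at hL
    rw [AddMonoidHom.range_eq_top.mpr (parity_surjective), AddSubgroup.card_top,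
      Nat.card_eq_fintype_card (α := Bool), Fintype.card_bool] at hP
    omega

lemma card_rotXor_fiber [NeZero n] {a b : ℕ} (hab : b ≤ a) (hgcd : Nat.gcd n (a - b) = 1)
    {β : Fin n → Bool} (hβ : parity n β = 0) : #{x | rotXor n a b x = β} = 2 := by
  have hβ_mem : β ∈ Set.range (rotXor n a b) := by
    rw [← AddMonoidHom.coe_range, range_rotXor hab hgcd]
    exact hβ
  rw [AddMonoidHom.card_fiber_eq_of_mem_range _ hβ_mem ⟨0, map_zero _⟩,
    ← card_ker_rotXor hab hgcd, Nat.card_eq_fintype_card, Fintype.card_subtype]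
  simp only [AddMonoidHom.mem_ker]

lemma diff_allOnes_eq_rotXor {a b c : ℕ} {f : (Fin n → Bool) → Fin n → Bool}
    (hf : ∀ x, f x = fun i => xor (rotL n a x i && rotL n b x i) (rotL n c x i))
    (x : Fin n → Bool) :
    (fun i => xor (f x i) (f (fun j => xor (x j) true) i)) = rotXor n a b x := by
  have key : ∀ p q r : Bool,
      xor (xor (p && q) r) (xor (xor p true && xor q true) (xor r true)) = xor p q := by decide
  funext i
  rw [hf, hf]
  exact key _ _ _

theorem simon_diff_allones_even (n a b c : ℕ) (hn : 0 < n) (hneven : Even n)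
    (hab : a > b) (hgcd : Nat.gcd n (a - b) = 1)
    (f : (Fin n → Bool) → Fin n → Bool)
    (hf : ∀ x, f x = fun i => xor (rotL n a x i && rotL n b x i) (rotL n c x i))
    (α β γ : Fin n → Bool)
    (hα : α = fun _ => true)
    (hγ : γ = fun i => xor (β i) (rotL n c α i))
    (hwt : hw γ % 2 = 0) :
    diffProb n f α β = (2 : ℚ) ^ (-(n : ℤ) + 1) := by
  subst hα hγ
  have : NeZero n := ⟨hn.ne'⟩
  have hβ : parity n β = 0 := by
    have hγ := (parity_eq_zero_iff _).mpr hwt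
    change parity n (β + fun _ => true) = 0 at hγ
    rwa [map_add, parity_const_true hneven, add_zero] at hγ
  have hcount : #{x | (fun i => xor (f x i) (f (fun j => xor (x j) true) i)) = β} = 2 := by
    simp only [diff_allOnes_eq_rotXor hf]
    exact card_rotXor_fiber hab.le hgcd hβ
  rw [diffProb, hcount, zpow_add₀ two_ne_zero, zpow_neg, zpow_natCast, zpow_one]
  push_cast
  ring
end

section
/- Let n be even, a > b, gcd(n, a−b) = 1, and let f : F₂ⁿ → F₂ⁿ be defined by f(x) = (Sᵃ(x) ∧ Sᵇ(x)) ⊕ Sᶜ(x). Let α = 1ⁿ and β ∈ F₂ⁿ, and set γ = β ⊕ Sᶜ(α). If wt(γ) ≡ 1 (mod 2), then the differential probability Pr(α →f β) = #{x ∈ F₂ⁿ : f(x) ⊕ f(x ⊕ α) = β} / 2ⁿ equals 0 (i.e., no x satisfies f(x) ⊕ f(x ⊕ α) = β). -/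
/-!
Flipping every input bit flips both operands of the AND and the linear term, so
`f x ⊕ f (x ⊕ 1ⁿ) = Sᵃ(x) ⊕ Sᵇ(x)` for every `x`, and hence `γ = 1ⁿ ⊕ Sᵃ(x) ⊕ Sᵇ(x)` whenever
`β` is reached. Modulo 2 the weight is additive under `⊕` and invariant under rotation, so
`wt(γ) ≡ n + 2 wt(x) ≡ 0`, contradicting the parity of `wt(γ)`.
-/

lemma bijective_add_mod_fin (n t : ℕ) :
    Function.Bijective fun i : Fin n => (⟨(i.val + t) % n, Nat.mod_lt _ i.pos⟩ : Fin n) := by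
  refine Finite.injective_iff_bijective.mp fun i j hij => Fin.ext ?_
  exact (Nat.ModEq.add_right_cancel' t (Fin.mk.inj hij)).eq_of_lt_of_lt i.isLt j.isLt

lemma hw_rotL (n t : ℕ) (x : Fin n → Bool) : hw (rotL n t x) = hw x := by
  simp only [hw, Finset.card_filter]
  exact Fintype.sum_bijective _ (bijective_add_mod_fin n t) _ _ fun _ => rfl

lemma hw_const_true (n : ℕ) : hw (fun _ : Fin n => true) = n := by
  simp [hw]

lemma natCast_hw_xor {n : ℕ} (x y : Fin n → Bool) :
    (hw (fun i => xor (x i) (y i)) : ZMod 2) = hw x + hw y := by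
  simp only [hw, Finset.natCast_card_filter, ← Finset.sum_add_distrib]
  refine Finset.sum_congr rfl fun i _ => ?_
  cases x i <;> cases y i <;> decide

lemma rotL_not (n t : ℕ) (x : Fin n → Bool) :
    rotL n t (fun j => xor (x j) true) = fun i => !rotL n t x i := by
  funext i
  simp only [rotL, Bool.xor_true]

lemma rotL_const (n t : ℕ) (v : Bool) : rotL n t (fun _ => v) = fun _ => v := rfl

lemma xor_xor_and_not_and_xor_not (p q r : Bool) :
    xor (xor (p && q) r) (xor (!p && !q) (!r)) = xor p q := by
  cases p <;> cases q <;> cases r <;> rfl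

theorem simon_diff_allones_odd_general (n a b c : ℕ) (hneven : Even n)
    (f : (Fin n → Bool) → Fin n → Bool)
    (hf : ∀ x, f x = fun i => xor (rotL n a x i && rotL n b x i) (rotL n c x i))
    (α β γ : Fin n → Bool)
    (hα : α = fun _ => true)
    (hγ : γ = fun i => xor (β i) (rotL n c α i))
    (hwt : hw γ % 2 = 1) :
    diffProb n f α β = 0 ∧
      ∀ x : Fin n → Bool,
        (fun i => xor (f x i) (f (fun j => xor (x j) (α j)) i)) ≠ β := by
  have unreachable : ∀ x : Fin n → Bool,
      (fun i => xor (f x i) (f (fun j => xor (x j) (α j)) i)) ≠ β := by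
    intro x hx
    subst hα hγ
    simp only [hf, rotL_not, xor_xor_and_not_and_xor_not] at hx
    have hγ_even : (hw fun i => xor (β i) (rotL n c (fun _ => true) i) : ZMod 2) = 0 := by
      rw [rotL_const, ← hx, natCast_hw_xor, natCast_hw_xor, hw_rotL, hw_rotL, hw_const_true,
        ZMod.natCast_eq_zero_iff_even.mpr hneven, CharTwo.add_self_eq_zero, zero_add]
    rw [← ZMod.natCast_mod, hwt, Nat.cast_one] at hγ_even
    exact one_ne_zero hγ_even
  refine ⟨?_, unreachable⟩
  rw [diffProb, Finset.filter_false_of_mem fun x _ => unreachable x]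
  simp

theorem simon_diff_allones_odd (n a b c : ℕ) (hn : 0 < n) (hneven : Even n)
    (hab : a > b) (hgcd : Nat.gcd n (a - b) = 1)
    (f : (Fin n → Bool) → Fin n → Bool)
    (hf : ∀ x, f x = fun i => xor (rotL n a x i && rotL n b x i) (rotL n c x i))
    (α β γ : Fin n → Bool)
    (hα : α = fun _ => true)
    (hγ : γ = fun i => xor (β i) (rotL n c α i))
    (hwt : hw γ % 2 = 1) :
    diffProb n f α β = 0 ∧
      ∀ x : Fin n → Bool,
        (fun i => xor (f x i) (f (fun j => xor (x j) (α j)) i)) ≠ β :=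
  simon_diff_allones_odd_general n a b c hneven f hf α β γ hα hγ hwt
end

section
/- Let n be even, a > b, gcd(n, a−b) = 1, and let f : F₂ⁿ → F₂ⁿ be defined by f(x) = (Sᵃ(x) ∧ Sᵇ(x)) ⊕ Sᶜ(x). Let α, β ∈ F₂ⁿ with α ≠ 1ⁿ, and define varibits = Sᵃ(α) ∨ Sᵇ(α), doublebits = Sᵇ(α) ∧ ¬Sᵃ(α) ∧ S^{2a−b}(α), and γ = β ⊕ Sᶜ(α). If γ ∧ ¬varibits = 0ⁿ and (γ ⊕ S^{a−b}(γ)) ∧ doublebits = 0ⁿ, then the differential probability Pr(α →f β) = #{x ∈ F₂ⁿ : f(x) ⊕ f(x ⊕ α) = β} / 2ⁿ equals 2^{−wt(varibits ⊕ doublebits)}. -/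
/-!
Put `d = a - b`, a unit mod `n`, and read the unknowns along `k ↦ k * d` and the equations along
`k ↦ k * d - b`. The derivative of `x ↦ Sᵃ(x) ∧ Sᵇ(x)` in direction `α` is affine in `x`, so
`f(x) ⊕ f(x ⊕ α) = β` becomes the cyclic linear system `B k * v (k + 1) + B (k + 1) * v k = e k`
over `F₂`, with `B k = α (k * d)` and `e k = γ (k * d - b) + B k * B (k + 1)`. A row with
`B k = B (k + 1) = 0` vanishes and one with `(B k, B (k + 1), B (k + 2)) = (1, 0, 1)` repeats the
next row; the two hypotheses on `γ` make these rows consistent. The other rows, the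
pivots, are counted by `wt(varibits ⊕ doublebits)` and are independent: each row `k` has a dual
vector, either a unit vector or the indicator of `k` together with the run of ones of `B` just
before it (a proper run, as `α ≠ 1ⁿ`). Hence the solutions form a coset of size `2 ^ (n - #pivots)`.
-/

open Finset

theorem card_fiber_mul_card_of_surjective {G M F : Type*} [AddGroup G] [Fintype G] [AddMonoid M]
    [Fintype M] [DecidableEq M] [FunLike F G M] [AddMonoidHomClass F G M] (f : F)
    (hf : Function.Surjective f) (y : M) :
    #{g | f g = y} * Fintype.card M = Fintype.card G := calc
  _ = ∑ x : M, #{g | f g = x} := by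
    rw [sum_congr rfl fun x _ ↦ AddMonoidHom.card_fiber_eq_of_mem_range f (hf x) (hf y),
      sum_const, card_univ, smul_eq_mul, mul_comm]
  _ = Fintype.card G := (card_eq_sum_card_fiberwise fun _ _ ↦ mem_univ _).symm

theorem ZMod.val_add_one_of_ne_neg_one {n : ℕ} [NeZero n] {x : ZMod n} (hx : x ≠ -1) :
    (x + 1).val = x.val + 1 := by
  have hcast : ((x.val + 1 : ℕ) : ZMod n) = x + 1 := by simp
  have hlt : x.val + 1 < n := by
    by_contra hge
    rw [show x.val + 1 = n by have := x.val_lt; omega, ZMod.natCast_self] at hcast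
    exact hx (eq_neg_of_add_eq_zero_left hcast.symm)
  rw [← hcast, ZMod.val_cast_of_lt hlt]

namespace CyclicChain

variable {n : ℕ} (B : ZMod n → Bool)

def row (v : ZMod n → Bool) (k : ZMod n) : Bool := B k * v (k + 1) + B (k + 1) * v k

def vari (k : ZMod n) : Bool := B (k + 1) || B k

def double (k : ZMod n) : Bool := B k && (!B (k + 1) && B (k + 2))

def run (k j : ZMod n) : Bool := decide (∀ i < (k - j).val, B (j + i) = true)

def dual (k : ZMod n) : ZMod n → Bool := if B (k + 1) then run B k else Pi.single (k + 1) 1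

variable [NeZero n]

def pivots : Finset (ZMod n) := {k | vari B k = true ∧ double B k = false}

def rowMap : (ZMod n → Bool) →ₗ[Bool] (pivots B → Bool) where
  toFun v k := row B v k
  map_add' v w := by ext k; simp only [row, Pi.add_apply]; ring
  map_smul' c v := by ext k; simp only [row, Pi.smul_apply, smul_eq_mul, RingHom.id_apply]; ring

variable {B}

lemma mem_pivots_iff_xor {k : ZMod n} : k ∈ pivots B ↔ xor (vari B k) (double B k) = true := by
  rw [pivots, mem_filter_univ, vari, double]
  cases B k <;> cases B (k + 1) <;> cases B (k + 2) <;> decide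

omit [NeZero n] in
lemma run_self (k : ZMod n) : run B k k = true := by
  simp [run]

lemma run_of_ne {j k : ZMod n} (h : j ≠ k) : run B k j = (B j && run B k (j + 1)) := by
  have hval : (k - j).val = (k - (j + 1)).val + 1 := by
    rw [← ZMod.val_add_one_of_ne_neg_one fun h' ↦ h (by linear_combination -h')]
    ring_nf
  simp only [run, hval, Nat.forall_lt_succ_left, Nat.cast_zero, add_zero, Nat.cast_add, Nat.cast_one,
    add_assoc, add_comm (1 : ZMod n)]
  simp [Bool.decide_and]

lemma run_add_one_self (hB : ∃ j, B j = false) {k : ZMod n} (hk : B k = true) :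
    run B k (k + 1) = false := by
  obtain ⟨j, hj⟩ := hB
  have hjk : j ≠ k := by rintro rfl; simp_all
  have hj1 : (j - (k + 1)).val + 1 = (j - k).val := by
    rw [← ZMod.val_add_one_of_ne_neg_one fun h' ↦ hjk (by linear_combination h')]
    ring_nf
  have hk1 : (k - (k + 1)).val = n - 1 := by
    obtain ⟨m, rfl⟩ := Nat.exists_eq_succ_of_ne_zero (NeZero.ne n)
    simp [ZMod.val_neg_one]
  simp only [run, decide_eq_false_iff_not, not_forall]
  refine ⟨(j - (k + 1)).val, by have := (j - k).val_lt; omega, ?_⟩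
  simpa [ZMod.natCast_zmod_val] using hj

lemma row_run (hB : ∃ j, B j = false) {k m : ZMod n} (hk1 : B (k + 1) = true)
    (hm : double B m = false) : row B (run B k) m = if m = k then 1 else 0 := by
  by_cases hmk : m = k
  · subst hmk
    rw [row, run_self, hk1, if_pos rfl]
    cases hk : B m
    · rfl
    · rw [run_add_one_self hB hk]; rfl
  rw [row, run_of_ne hmk, if_neg hmk]
  by_cases hm1 : m + 1 = k
  · subst hm1
    rw [add_assoc, one_add_one_eq_two] at hk1
    rw [double, hk1] at hm
    rw [run_self]
    revert hm; cases B m <;> cases B (m + 1) <;> decide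
  · rw [run_of_ne hm1]
    cases B m <;> cases B (m + 1) <;> cases run B k (m + 1 + 1) <;> rfl

lemma row_single_add_one {k m : ZMod n} (hk : k ∈ pivots B) (hk1 : B (k + 1) = false) :
    row B (Pi.single (k + 1) 1) m = if m = k then 1 else 0 := by
  rw [pivots, mem_filter_univ, vari, double, hk1] at hk
  have hBk : B k = true := by simpa using hk.1
  have hBk2 : B (k + 2) = false := by simpa [hBk] using hk.2
  by_cases hmk : m = k
  · subst hmk
    simp [row, hBk, hk1, Bool.mul_eq_and, Bool.add_eq_xor, Bool.one_eq_true]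
  · have hmk1 : m + 1 ≠ k + 1 := fun h ↦ hmk (add_right_cancel h)
    by_cases hm : m = k + 1
    · subst hm
      simp [row, hmk, add_assoc, one_add_one_eq_two, hk1, hBk2, Bool.mul_eq_and, Bool.zero_eq_false]
    · simp [row, hmk, hmk1, hm]

lemma rowMap_dual (hB : ∃ j, B j = false) {k : ZMod n} (hk : k ∈ pivots B) :
    rowMap B (dual B k) = Pi.single ⟨k, hk⟩ 1 := by
  ext ⟨m, hm⟩
  change row B (dual B k) m = _
  simp only [Pi.single_apply, Subtype.mk_eq_mk]
  by_cases hk1 : B (k + 1) = true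
  · rw [dual, if_pos hk1]
    exact row_run hB hk1 ((mem_filter_univ m).1 hm).2
  · rw [dual, if_neg hk1]
    exact row_single_add_one hk (by simpa using hk1)

lemma rowMap_surjective (hB : ∃ j, B j = false) : Function.Surjective (rowMap B) := by
  intro t
  refine ⟨∑ k : pivots B, t k • dual B k, ?_⟩
  rw [map_sum]
  conv_rhs => rw [← univ_sum_single t]
  refine sum_congr rfl fun k _ ↦ ?_
  rw [map_smul, rowMap_dual hB k.2, ← Pi.single_smul, smul_eq_mul, mul_one]

variable {e : ZMod n → Bool}

lemma row_eq_of_forall_mem_pivots (he0 : ∀ k, vari B k = false → e k = false)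
    (he1 : ∀ k, double B k = true → e k = e (k + 1)) {v : ZMod n → Bool}
    (hv : ∀ k ∈ pivots B, row B v k = e k) (k : ZMod n) : row B v k = e k := by
  by_cases hk : k ∈ pivots B
  · exact hv k hk
  rw [pivots, mem_filter_univ, not_and_or, Bool.not_eq_true, Bool.not_eq_false] at hk
  rcases hk with hvari | hdouble
  · obtain ⟨hk1, hk0⟩ : B (k + 1) = false ∧ B k = false := by simpa [vari] using hvari
    rw [he0 k hvari, row, hk1, hk0]
    rfl
  · obtain ⟨hk0, hk1, hk2⟩ : B k = true ∧ B (k + 1) = false ∧ B (k + 1 + 1) = true := by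
      simpa [double, add_assoc, one_add_one_eq_two] using hdouble
    have hpiv : k + 1 ∈ pivots B := by
      simp [pivots, vari, double, hk1, hk2]
    rw [he1 k hdouble, ← hv _ hpiv, row, row, hk0, hk1, hk2]
    simp [Bool.mul_eq_and, Bool.add_eq_xor]

theorem card_solutions_mul_two_pow (hB : ∃ j, B j = false)
    (he0 : ∀ k, vari B k = false → e k = false) (he1 : ∀ k, double B k = true → e k = e (k + 1)) :
    #{v : ZMod n → Bool | ∀ k, row B v k = e k} * 2 ^ #(pivots B) = 2 ^ n := by
  have hsol (v : ZMod n → Bool) : (∀ k, row B v k = e k) ↔ rowMap B v = fun k : pivots B ↦ e k := by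
    rw [funext_iff]
    exact ⟨fun h k ↦ h k, fun h ↦ row_eq_of_forall_mem_pivots he0 he1 fun k hk ↦ h ⟨k, hk⟩⟩
  rw [filter_congr fun v _ ↦ hsol v]
  simpa [Fintype.card_fun, ZMod.card] using
    card_fiber_mul_card_of_surjective (rowMap B) (rowMap_surjective hB) fun k : pivots B ↦ e k

end CyclicChain

section Simon

variable {n : ℕ} [NeZero n]

lemma ZMod.val_finEquiv_symm (z : ZMod n) : ((ZMod.finEquiv n).symm z).val = z.val := by
  obtain ⟨m, rfl⟩ := Nat.exists_eq_succ_of_ne_zero (NeZero.ne n)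
  rfl

lemma rotL_finEquiv_symm (t : ℕ) (x : Fin n → Bool) (z : ZMod n) :
    rotL n t x ((ZMod.finEquiv n).symm z) = x ((ZMod.finEquiv n).symm (z + t)) := by
  refine congrArg x (Fin.ext ?_)
  rw [Fin.val_mk, ZMod.val_finEquiv_symm, ZMod.val_finEquiv_symm, ZMod.val_add, ZMod.val_natCast,
    Nat.add_mod_mod]

def chainEquiv (u : (ZMod n)ˣ) (s : ZMod n) : ZMod n ≃ Fin n :=
  ((Units.mulRight u).trans (Equiv.addRight s)).trans (ZMod.finEquiv n).symm.toEquiv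

def chainRhs (u : (ZMod n)ˣ) (b : ℕ) (α γ : Fin n → Bool) (k : ZMod n) : Bool :=
  γ (chainEquiv u (-b) k) + α (chainEquiv u 0 k) * α (chainEquiv u 0 (k + 1))

variable {u : (ZMod n)ˣ}

lemma rotL_chainEquiv {t : ℕ} {s s' k k' : ZMod n} (h : k * u + s + t = k' * u + s')
    (x : Fin n → Bool) : rotL n t x (chainEquiv u s k) = x (chainEquiv u s' k') := by
  simp only [chainEquiv, Equiv.trans_apply, Units.mulRight_apply, Equiv.coe_addRight,
    RingEquiv.toEquiv_eq_coe, RingEquiv.coe_toEquiv, rotL_finEquiv_symm, h]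

variable {a b : ℕ}

lemma rotL_b_chainEquiv (x : Fin n → Bool) (k : ZMod n) :
    rotL n b x (chainEquiv u (-b) k) = x (chainEquiv u 0 k) :=
  rotL_chainEquiv (by ring) x

lemma rotL_a_chainEquiv (hab : b ≤ a) (hu : (u : ZMod n) = (a - b : ℕ)) (x : Fin n → Bool)
    (k : ZMod n) : rotL n a x (chainEquiv u (-b) k) = x (chainEquiv u 0 (k + 1)) :=
  rotL_chainEquiv (by rw [hu, Nat.cast_sub hab]; ring) x

variable {α : Fin n → Bool}

lemma diff_chainEquiv (hab : b ≤ a) (hu : (u : ZMod n) = (a - b : ℕ)) {c : ℕ}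
    {f : (Fin n → Bool) → Fin n → Bool}
    (hf : ∀ x, f x = fun i => xor (rotL n a x i && rotL n b x i) (rotL n c x i))
    (x : Fin n → Bool) (k : ZMod n) :
    (f x + f (x + α)) (chainEquiv u (-b) k) =
      CyclicChain.row (α ∘ chainEquiv u 0) (x ∘ chainEquiv u 0) k +
        α (chainEquiv u 0 k) * α (chainEquiv u 0 (k + 1)) + rotL n c α (chainEquiv u (-b) k) := by
  have hdiff (p q r s w z : Bool) :
      xor (xor (p && q) w) (xor ((p + r) && (q + s)) (w + z)) = s * p + r * q + s * r + z := by
    revert p q r s w z; decide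
  rw [Pi.add_apply, hf, hf]
  simp only [rotL_a_chainEquiv hab hu, rotL_b_chainEquiv]
  exact hdiff _ _ _ _ _ _

lemma card_diff_eq_card_solutions (hab : b ≤ a) (hu : (u : ZMod n) = (a - b : ℕ)) {c : ℕ}
    {f : (Fin n → Bool) → Fin n → Bool}
    (hf : ∀ x, f x = fun i => xor (rotL n a x i && rotL n b x i) (rotL n c x i))
    {β γ : Fin n → Bool} (hγ : γ = fun i => xor (β i) (rotL n c α i)) :
    #{x | f x + f (x + α) = β} =
      #{v | ∀ k, CyclicChain.row (α ∘ chainEquiv u 0) v k = chainRhs u b α γ k} := by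
  have hsolve (r m z g : Bool) : r + m + z = g ↔ r = xor g z + m := by
    revert r m z g; decide
  refine card_equiv ((chainEquiv u 0).arrowCongr (Equiv.refl Bool)).symm fun x ↦ ?_
  rw [mem_filter_univ, mem_filter_univ, funext_iff, ← (chainEquiv u (-b)).forall_congr_right]
  simp only [diff_chainEquiv hab hu hf, chainRhs, hγ]
  exact forall_congr' fun k ↦ hsolve _ _ _ _

lemma varibits_chainEquiv (hab : b ≤ a) (hu : (u : ZMod n) = (a - b : ℕ))
    {varibits : Fin n → Bool} (hvb : varibits = fun i => (rotL n a α i || rotL n b α i))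
    (k : ZMod n) : varibits (chainEquiv u (-b) k) = CyclicChain.vari (α ∘ chainEquiv u 0) k := by
  simp only [hvb, rotL_a_chainEquiv hab hu, rotL_b_chainEquiv]
  rfl

lemma doublebits_chainEquiv (hab : b ≤ a) (hu : (u : ZMod n) = (a - b : ℕ))
    {doublebits : Fin n → Bool}
    (hdb : doublebits = fun i => (rotL n b α i && (!(rotL n a α i) && rotL n (2 * a - b) α i)))
    (k : ZMod n) :
    doublebits (chainEquiv u (-b) k) = CyclicChain.double (α ∘ chainEquiv u 0) k := by
  have h2a : rotL n (2 * a - b) α (chainEquiv u (-b) k) = α (chainEquiv u 0 (k + 2)) :=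
    rotL_chainEquiv (by rw [hu, Nat.cast_sub hab, Nat.cast_sub (by omega)]; push_cast; ring) α
  simp only [hdb, rotL_a_chainEquiv hab hu, rotL_b_chainEquiv, h2a]
  rfl

lemma hw_eq_card_pivots (hab : b ≤ a) (hu : (u : ZMod n) = (a - b : ℕ))
    {varibits doublebits : Fin n → Bool}
    (hvb : varibits = fun i => (rotL n a α i || rotL n b α i))
    (hdb : doublebits = fun i => (rotL n b α i && (!(rotL n a α i) && rotL n (2 * a - b) α i))) :
    hw (fun i => xor (varibits i) (doublebits i)) = #(CyclicChain.pivots (α ∘ chainEquiv u 0)) := by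
  rw [hw]
  refine card_equiv (chainEquiv u (-b)).symm fun i ↦ ?_
  rw [CyclicChain.mem_pivots_iff_xor, mem_filter_univ, ← varibits_chainEquiv hab hu hvb,
    ← doublebits_chainEquiv hab hu hdb, Equiv.apply_symm_apply]

lemma chainRhs_eq_false_of_vari_eq_false (hab : b ≤ a) (hu : (u : ZMod n) = (a - b : ℕ))
    {γ varibits : Fin n → Bool} (hvb : varibits = fun i => (rotL n a α i || rotL n b α i))
    (h1 : (fun i => γ i && !(varibits i)) = fun _ => false) {k : ZMod n}
    (hk : CyclicChain.vari (α ∘ chainEquiv u 0) k = false) : chainRhs u b α γ k = false := by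
  obtain ⟨hk1, hk0⟩ : α (chainEquiv u 0 (k + 1)) = false ∧ α (chainEquiv u 0 k) = false := by
    simpa [CyclicChain.vari] using hk
  have hγk : γ (chainEquiv u (-b) k) = false := by
    simpa [varibits_chainEquiv hab hu hvb, hk] using congrFun h1 (chainEquiv u (-b) k)
  rw [chainRhs, hγk, hk0, hk1]
  rfl

lemma chainRhs_eq_of_double_eq_true (hab : b ≤ a) (hu : (u : ZMod n) = (a - b : ℕ))
    {γ doublebits : Fin n → Bool}
    (hdb : doublebits = fun i => (rotL n b α i && (!(rotL n a α i) && rotL n (2 * a - b) α i)))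
    (h2 : (fun i => (xor (γ i) (rotL n (a - b) γ i)) && doublebits i) = fun _ => false)
    {k : ZMod n} (hk : CyclicChain.double (α ∘ chainEquiv u 0) k = true) :
    chainRhs u b α γ k = chainRhs u b α γ (k + 1) := by
  obtain ⟨-, hk1, -⟩ : _ ∧ α (chainEquiv u 0 (k + 1)) = false ∧ _ := by
    simpa [CyclicChain.double] using hk
  have hshift : rotL n (a - b) γ (chainEquiv u (-b) k) = γ (chainEquiv u (-b) (k + 1)) :=
    rotL_chainEquiv (by rw [hu]; ring) γ
  have hγk : γ (chainEquiv u (-b) k) = γ (chainEquiv u (-b) (k + 1)) := by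
    simpa [doublebits_chainEquiv hab hu hdb, hk, hshift] using congrFun h2 (chainEquiv u (-b) k)
  rw [chainRhs, chainRhs, hγk, hk1]
  simp [Bool.mul_eq_and]

end Simon

lemma exists_comp_eq_false {ι : Type*} {n : ℕ} {α : Fin n → Bool} (hα : α ≠ fun _ => true)
    (e : ι ≃ Fin n) :
    ∃ k, (α ∘ e) k = false := by
  obtain ⟨i, hi⟩ := Function.ne_iff.1 hα
  exact ⟨e.symm i, by simpa using hi⟩

lemma diffProb_eq_two_zpow {n : ℕ} {f : (Fin n → Bool) → Fin n → Bool} {α β : Fin n → Bool}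
    {w : ℕ} (h : #{x | f x + f (x + α) = β} * 2 ^ w = 2 ^ n) :
    diffProb n f α β = 2 ^ (-(w : ℤ)) := by
  have hq : (#{x | f x + f (x + α) = β} : ℚ) * 2 ^ w = 2 ^ n := by exact_mod_cast h
  change (#{x | f x + f (x + α) = β} : ℚ) / 2 ^ n = _
  rw [zpow_neg, zpow_natCast, div_eq_iff (by positivity), ← hq]
  field_simp

theorem simon_diff_prob_valid_general (n a b c : ℕ)
    (hab : a > b) (hgcd : Nat.gcd n (a - b) = 1)
    (f : (Fin n → Bool) → Fin n → Bool)
    (hf : ∀ x, f x = fun i => xor (rotL n a x i && rotL n b x i) (rotL n c x i))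
    (α β γ varibits doublebits : Fin n → Bool)
    (hα : α ≠ fun _ => true)
    (hvb : varibits = fun i => (rotL n a α i || rotL n b α i))
    (hdb : doublebits = fun i => (rotL n b α i && (!(rotL n a α i) && rotL n (2 * a - b) α i)))
    (hγ : γ = fun i => xor (β i) (rotL n c α i))
    (h1 : (fun i => γ i && !(varibits i)) = fun _ => false)
    (h2 : (fun i => (xor (γ i) (rotL n (a - b) γ i)) && doublebits i) = fun _ => false) :
    diffProb n f α β =
      (2 : ℚ) ^ (-((hw (fun i => xor (varibits i) (doublebits i)) : ℤ))) := by
  have : NeZero n := ⟨by rintro rfl; exact hα (funext fun i ↦ i.elim0)⟩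
  obtain ⟨u, hu⟩ := (ZMod.isUnit_iff_coprime (a - b) n).2 (Nat.coprime_comm.1 hgcd)
  rw [hw_eq_card_pivots hab.le hu hvb hdb]
  refine diffProb_eq_two_zpow ?_
  rw [card_diff_eq_card_solutions hab.le hu hf hγ]
  exact CyclicChain.card_solutions_mul_two_pow (exists_comp_eq_false hα _)
    (fun _ ↦ chainRhs_eq_false_of_vari_eq_false hab.le hu hvb h1)
    (fun _ ↦ chainRhs_eq_of_double_eq_true hab.le hu hdb h2)

theorem simon_diff_prob_valid (n a b c : ℕ) (hn : 0 < n) (hneven : Even n)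
    (hab : a > b) (hgcd : Nat.gcd n (a - b) = 1)
    (f : (Fin n → Bool) → Fin n → Bool)
    (hf : ∀ x, f x = fun i => xor (rotL n a x i && rotL n b x i) (rotL n c x i))
    (α β γ varibits doublebits : Fin n → Bool)
    (hα : α ≠ fun _ => true)
    (hvb : varibits = fun i => (rotL n a α i || rotL n b α i))
    (hdb : doublebits = fun i => (rotL n b α i && (!(rotL n a α i) && rotL n (2 * a - b) α i)))
    (hγ : γ = fun i => xor (β i) (rotL n c α i))
    (h1 : (fun i => γ i && !(varibits i)) = fun _ => false)
    (h2 : (fun i => (xor (γ i) (rotL n (a - b) γ i)) && doublebits i) = fun _ => false) :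
    diffProb n f α β =
      (2 : ℚ) ^ (-((hw (fun i => xor (varibits i) (doublebits i)) : ℤ))) :=
  simon_diff_prob_valid_general n a b c hab hgcd f hf α β γ varibits doublebits hα hvb hdb hγ h1 h2
end

section
/- Let n be even, a > b, gcd(n, a−b) = 1, and let f : F₂ⁿ → F₂ⁿ be defined by f(x) = (Sᵃ(x) ∧ Sᵇ(x)) ⊕ Sᶜ(x). Let α, β ∈ F₂ⁿ with α ≠ 1ⁿ, and define varibits = Sᵃ(α) ∨ Sᵇ(α), doublebits = Sᵇ(α) ∧ ¬Sᵃ(α) ∧ S^{2a−b}(α), and γ = β ⊕ Sᶜ(α). If γ ∧ ¬varibits ≠ 0ⁿ or (γ ⊕ S^{a−b}(γ)) ∧ doublebits ≠ 0ⁿ, then there is no x ∈ F₂ⁿ with f(x) ⊕ f(x ⊕ α) = β, i.e., the differential probability Pr(α →f β) equals 0. -/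
private lemma bkey (p q r u v w bi : Bool)
    (h : xor (xor (p && q) r) (xor ((xor p u) && (xor q v)) (xor r w)) = bi) :
    xor (p && q) ((xor p u) && (xor q v)) = xor bi w := by
  revert h; cases p <;> cases q <;> cases r <;> cases u <;> cases v <;> cases w <;>
    cases bi <;> decide

private lemma bkey1 (p q g : Bool)
    (h : xor (p && q) ((xor p false) && (xor q false)) = g) (hg : g = true) : False := by
  subst h; revert hg; cases p <;> cases q <;> decide

private lemma bkey2 (p q p2 gi gj : Bool)
    (h1 : xor (p && q) ((xor p false) && (xor q true)) = gi)
    (h2 : xor (p2 && p) ((xor p2 true) && (xor p false)) = gj)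
    (hx : xor gi gj = true) : False := by
  subst h1; subst h2; revert hx; cases p <;> cases q <;> cases p2 <;> decide

theorem simon_diff_prob_invalid (n a b c : ℕ) (hn : 0 < n) (hneven : Even n)
    (hab : a > b) (hgcd : Nat.gcd n (a - b) = 1)
    (f : (Fin n → Bool) → Fin n → Bool)
    (hf : ∀ x, f x = fun i => xor (rotL n a x i && rotL n b x i) (rotL n c x i))
    (α β γ varibits doublebits : Fin n → Bool)
    (hα : α ≠ fun _ => true)
    (hvb : varibits = fun i => (rotL n a α i || rotL n b α i))
    (hdb : doublebits = fun i => (rotL n b α i && (!(rotL n a α i) && rotL n (2 * a - b) α i)))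
    (hγ : γ = fun i => xor (β i) (rotL n c α i))
    (hbad : (fun i => γ i && !(varibits i)) ≠ (fun _ => false) ∨
      (fun i => (xor (γ i) (rotL n (a - b) γ i)) && doublebits i) ≠ (fun _ => false)) :
    (∀ x : Fin n → Bool,
        (fun i => xor (f x i) (f (fun j => xor (x j) (α j)) i)) ≠ β) ∧
      diffProb n f α β = 0 := by
  have hmain : ∀ x : Fin n → Bool,
      (fun i => xor (f x i) (f (fun j => xor (x j) (α j)) i)) ≠ β := by
    intro x heq
    have E : ∀ i, xor (f x i) (f (fun j => xor (x j) (α j)) i) = β i :=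
      fun i => congrFun heq i
    have hD : ∀ i, xor (rotL n a x i && rotL n b x i)
        ((xor (rotL n a x i) (rotL n a α i)) && (xor (rotL n b x i) (rotL n b α i)))
        = γ i := by
      intro i
      have e := E i
      simp only [hf] at e
      have ra : rotL n a (fun j => xor (x j) (α j)) i = xor (rotL n a x i) (rotL n a α i) := rfl
      have rb : rotL n b (fun j => xor (x j) (α j)) i = xor (rotL n b x i) (rotL n b α i) := rfl
      have rc : rotL n c (fun j => xor (x j) (α j)) i = xor (rotL n c x i) (rotL n c α i) := rfl
      rw [ra, rb, rc] at e
      rw [hγ]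
      exact bkey _ _ _ _ _ _ _ e
    rcases hbad with h | h
    · rw [Function.ne_iff] at h
      obtain ⟨i, hi⟩ := h
      have hi' : (γ i && !(varibits i)) = true := Bool.ne_false_iff.mp hi
      rw [hvb] at hi'
      simp only [Bool.and_eq_true, Bool.not_eq_true', Bool.or_eq_false_iff] at hi'
      obtain ⟨hg, hu, hv⟩ := hi'
      have d := hD i
      rw [hu, hv] at d
      exact bkey1 _ _ _ d hg
    · rw [Function.ne_iff] at h
      obtain ⟨i, hi⟩ := h
      have hi' : ((xor (γ i) (rotL n (a - b) γ i)) && doublebits i) = true :=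
        Bool.ne_false_iff.mp hi
      rw [hdb] at hi'
      simp only [Bool.and_eq_true, Bool.not_eq_true'] at hi'
      obtain ⟨hx, hv, hu, h2⟩ := hi'
      set j : Fin n := ⟨(i.val + (a - b)) % n, Nat.mod_lt _ hn⟩ with hj
      have e1 : rotL n a α j = rotL n (2 * a - b) α i := by
        show α _ = α _
        congr 1
        apply Fin.ext
        show ((i.val + (a - b)) % n + a) % n = (i.val + (2 * a - b)) % n
        rw [Nat.mod_add_mod]
        congr 1
        omega
      have e2 : rotL n b α j = rotL n a α i := by
        show α _ = α _
        congr 1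
        apply Fin.ext
        show ((i.val + (a - b)) % n + b) % n = (i.val + a) % n
        rw [Nat.mod_add_mod]
        congr 1
        omega
      have e3 : rotL n b x j = rotL n a x i := by
        show x _ = x _
        congr 1
        apply Fin.ext
        show ((i.val + (a - b)) % n + b) % n = (i.val + a) % n
        rw [Nat.mod_add_mod]
        congr 1
        omega
      have e4 : rotL n (a - b) γ i = γ j := rfl
      have d1 := hD i
      have d2 := hD j
      rw [hu, hv] at d1
      rw [e1, e2, e3, h2, hu] at d2
      rw [e4] at hx
      exact bkey2 _ _ _ _ _ d1 d2 hx
  refine ⟨hmain, ?_⟩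
  unfold diffProb
  rw [Finset.filter_eq_empty_iff.mpr (fun x _ => hmain x)]
  simp
end

section
/- (Continuous difference propagation of AND) Let U, V be independent uniformly distributed Boolean random variables, and let Dₓ, D_y be Boolean random variables such that U, V, Dₓ, D_y are mutually independent, with continuous differences Cₓ = E[(−1)^{Dₓ}] and C_y = E[(−1)^{D_y}]. Define the output difference bit D_z = (U ∧ V) ⊕ ((U ⊕ Dₓ) ∧ (V ⊕ D_y)). Then the continuous difference of D_z satisfies C_z = E[(−1)^{D_z}] = (Cₓ·C_y + Cₓ + C_y + 1)/4. -/
/-!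
Expanding the AND gates, the output difference is `(U ∧ D_y) ⊕ (Dₓ ∧ V) ⊕ (Dₓ ∧ D_y)`.
Averaged over the uniform and independent `U` and `V`, its sign `(-1)^{D_z}` has mean `1`
when `Dₓ = D_y = 0` and mean `0` otherwise, so `C_z = Pr[Dₓ = 0] · Pr[D_y = 0] = (1 + Cₓ)/2 · (1 + C_y)/2`.
-/

open MeasureTheory ProbabilityTheory

/-- The continuous difference (correlation) `E[(-1)^D]` of a Boolean random variable. -/
noncomputable def cdiff {Ω : Type*} [MeasurableSpace Ω] (μ : Measure Ω) (D : Ω → Bool) : ℝ :=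
  ∫ ω, (if D ω then (-1 : ℝ) else 1) ∂μ

section

variable {Ω : Type*} [MeasurableSpace Ω] {μ : Measure Ω}

theorem integral_comp_eq_sum_measureReal_preimage {α : Type*} [Fintype α] [MeasurableSpace α]
    [MeasurableSingletonClass α] [IsFiniteMeasure μ] {T : Ω → α} (hT : Measurable T)
    (g : α → ℝ) :
    ∫ ω, g (T ω) ∂μ = ∑ x, μ.real (T ⁻¹' {x}) * g x := by
  rw [← integral_map hT.aemeasurable (measurable_of_finite g).aestronglyMeasurable,
    integral_fintype .of_finite]
  simp [Measure.real, Measure.map_apply hT (measurableSet_singleton _)]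

theorem measureReal_preimage_singleton_of_iIndepFun_four {β : Type*} [MeasurableSpace β]
    [MeasurableSingletonClass β] {X₀ X₁ X₂ X₃ : Ω → β} (h : iIndepFun ![X₀, X₁, X₂, X₃] μ)
    (a b c d : β) :
    μ.real ((fun ω => (X₀ ω, X₁ ω, X₂ ω, X₃ ω)) ⁻¹' {(a, b, c, d)})
      = μ.real (X₀ ⁻¹' {a}) * μ.real (X₁ ⁻¹' {b}) * μ.real (X₂ ⁻¹' {c})
        * μ.real (X₃ ⁻¹' {d}) := by
  have hset : (fun ω => (X₀ ω, X₁ ω, X₂ ω, X₃ ω)) ⁻¹' {(a, b, c, d)}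
      = ⋂ i ∈ Finset.univ, ![X₀, X₁, X₂, X₃] i ⁻¹' ![{a}, {b}, {c}, {d}] i := by
    ext ω
    simp [Fin.forall_fin_succ]
  rw [hset, Measure.real, h.measure_inter_preimage_eq_mul, ENNReal.toReal_prod, Fin.prod_univ_four]
  · rfl
  · intro i _; fin_cases i <;> exact measurableSet_singleton _

variable [IsProbabilityMeasure μ] {D : Ω → Bool}

theorem measureReal_preimage_false_add_true (hD : Measurable D) :
    μ.real (D ⁻¹' {false}) + μ.real (D ⁻¹' {true}) = 1 := by
  simpa [← Set.preimage_compl, Bool.compl_singleton] using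
    probReal_add_probReal_compl (μ := μ) (hD (measurableSet_singleton false))

theorem cdiff_eq_measureReal_sub (hD : Measurable D) :
    cdiff μ D = μ.real (D ⁻¹' {false}) - μ.real (D ⁻¹' {true}) := by
  rw [cdiff, integral_comp_eq_sum_measureReal_preimage hD (fun b => if b then (-1 : ℝ) else 1),
    Fintype.sum_bool]
  simp only [if_true, Bool.false_eq_true, if_false]
  ring

theorem measureReal_preimage_false_eq_cdiff_add_one_div_two (hD : Measurable D) :
    μ.real (D ⁻¹' {false}) = (cdiff μ D + 1) / 2 := by
  rw [cdiff_eq_measureReal_sub hD]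
  linarith [measureReal_preimage_false_add_true (μ := μ) hD]

theorem cdiff_and_difference_eq_measureReal_mul {U V X Y : Ω → Bool}
    (hU : Measurable U) (hV : Measurable V) (hX : Measurable X) (hY : Measurable Y)
    (hindep : iIndepFun ![U, V, X, Y] μ)
    (hUuni : ∀ b : Bool, μ {ω | U ω = b} = 1 / 2) (hVuni : ∀ b : Bool, μ {ω | V ω = b} = 1 / 2) :
    cdiff μ (fun ω => xor (U ω && V ω) ((xor (U ω) (X ω)) && (xor (V ω) (Y ω))))
      = μ.real (X ⁻¹' {false}) * μ.real (Y ⁻¹' {false}) := by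
  have hU_half (b : Bool) : μ.real (U ⁻¹' {b}) = 1 / 2 := by
    simp [measureReal_def, Set.preimage, hUuni]
  have hV_half (b : Bool) : μ.real (V ⁻¹' {b}) = 1 / 2 := by
    simp [measureReal_def, Set.preimage, hVuni]
  rw [cdiff, integral_comp_eq_sum_measureReal_preimage (hU.prodMk (hV.prodMk (hX.prodMk hY)))
    (fun x => if xor (x.1 && x.2.1) (xor x.1 x.2.2.1 && xor x.2.1 x.2.2.2) then (-1 : ℝ) else 1)]
  simp only [Fintype.sum_prod_type, Fintype.sum_bool,
    measureReal_preimage_singleton_of_iIndepFun_four hindep, hU_half, hV_half]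
  norm_num
  ring

end

theorem continuous_difference_and {Ω : Type*} [MeasurableSpace Ω]
    (μ : Measure Ω) [IsProbabilityMeasure μ]
    (U V Dx Dy : Ω → Bool)
    (hU : Measurable U) (hV : Measurable V)
    (hDx : Measurable Dx) (hDy : Measurable Dy)
    (hindep : iIndepFun ![U, V, Dx, Dy] μ)
    (hUuni : ∀ bv : Bool, μ {ω | U ω = bv} = 1 / 2)
    (hVuni : ∀ bv : Bool, μ {ω | V ω = bv} = 1 / 2) :
    cdiff μ (fun ω => xor (U ω && V ω) ((xor (U ω) (Dx ω)) && (xor (V ω) (Dy ω))))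
      = (cdiff μ Dx * cdiff μ Dy + cdiff μ Dx + cdiff μ Dy + 1) / 4 := by
  rw [cdiff_and_difference_eq_measureReal_mul hU hV hDx hDy hindep hUuni hVuni,
    measureReal_preimage_false_eq_cdiff_add_one_div_two hDx,
    measureReal_preimage_false_eq_cdiff_add_one_div_two hDy]
  ring
end

section
/- (One-round continuous difference update of the Simon-like round function, per bit position) Let U, V be independent uniformly distributed Boolean random variables, and let D_a, D_b, D_c, D_y be Boolean random variables such that U, V, D_a, D_b, D_c, D_y are mutually independent, with continuous differences c_a, c_b, c_c, c_y respectively. Define D_out = ((U ∧ V) ⊕ ((U ⊕ D_a) ∧ (V ⊕ D_b))) ⊕ D_c ⊕ D_y. Then E[(−1)^{D_out}] = (1/4)·(1 + c_a + c_b + c_a·c_b) · c_c · c_y. -/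
/-!
Writing `χ(b) = (-1)^b`, we have `χ(x ⊕ y) = χ(x) χ(y)`, so independence splits off the factors
`c_c` and `c_y`. For the AND part, `χ((u ∧ v) ⊕ ((u ⊕ a) ∧ (v ⊕ b)))` is a sum of `χ(u)` times a
function of `(v, a, b)`, `χ(v)` times a function of `(a, b)`, and `[a = 0] [b = 0]`. The first two
terms have mean zero because `U` and `V` are uniform and independent of what they multiply, and
the last has mean `Pr[D_a = 0] Pr[D_b = 0] = (1 + c_a) (1 + c_b) / 4`.
-/

open MeasureTheory ProbabilityTheory

noncomputable def boolSign (b : Bool) : ℝ := if b then -1 else 1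

lemma boolSign_xor (a b : Bool) : boolSign (xor a b) = boolSign a * boolSign b := by
  cases a <;> cases b <;> norm_num [boolSign]

/-- Expanding, `(u ∧ v) ⊕ ((u ⊕ a) ∧ (v ⊕ b)) = (u ∧ b) ⊕ (a ∧ v) ⊕ (a ∧ b)`, which is
`u ⊕ (a ∧ ¬v)` for `b = 1` and `a ∧ v` for `b = 0`. -/
lemma boolSign_and_xor_and (u v a b : Bool) :
    boolSign (xor (u && v) (xor u a && xor v b))
      = boolSign u * (if b then boolSign (a && !v) else 0)
        + (boolSign v * (if b then 0 else if a then 1 else 0)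
          + (1 + boolSign a) / 2 * ((1 + boolSign b) / 2)) := by
  cases u <;> cases v <;> cases a <;> cases b <;> norm_num [boolSign]

section

variable {Ω : Type*} [MeasurableSpace Ω] {μ : Measure Ω}

lemma ProbabilityTheory.iIndepFun.indepFun_comp_finset {ι γ α β : Type*} [MeasurableSpace γ]
    [Finite γ] [MeasurableSingletonClass γ] [MeasurableSpace α] [MeasurableSpace β] {X : ι → Ω → γ}
    (h : iIndepFun X μ) (hX : ∀ i, Measurable (X i)) {S T : Finset ι} (hST : Disjoint S T)
    (F : (S → γ) → α) (G : (T → γ) → β) :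
    IndepFun (fun ω => F fun i => X i ω) (fun ω => G fun i => X i ω) μ :=
  (h.indepFun_finset S T hST hX).comp (measurable_of_finite F) (measurable_of_finite G)

lemma integrable_comp_of_finite [IsFiniteMeasure μ] {α : Type*} [MeasurableSpace α] [Finite α]
    [MeasurableSingletonClass α] {X : Ω → α} (hX : Measurable X) (F : α → ℝ) :
    Integrable (fun ω => F (X ω)) μ :=
  Integrable.of_finite.comp_measurable hX

lemma cdiff_eq_integral_boolSign (D : Ω → Bool) : cdiff μ D = ∫ ω, boolSign (D ω) ∂μ := rfl

lemma cdiff_eq_zero_of_uniform [IsFiniteMeasure μ] {D : Ω → Bool} (hD : Measurable D)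
    (huni : ∀ b : Bool, μ {ω | D ω = b} = 1 / 2) : cdiff μ D = 0 := by
  rw [cdiff_eq_integral_boolSign, ← integral_map hD.aemeasurable .of_discrete,
    integral_fintype .of_finite]
  simp [Measure.real, Measure.map_apply hD, Set.preimage, huni, boolSign]

lemma integral_one_add_boolSign_div_two [IsProbabilityMeasure μ] {D : Ω → Bool}
    (hD : Measurable D) : ∫ ω, (1 + boolSign (D ω)) / 2 ∂μ = (1 + cdiff μ D) / 2 := by
  rw [integral_div, integral_add (integrable_const 1) (integrable_comp_of_finite hD _)]
  simp [cdiff_eq_integral_boolSign]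

theorem cdiff_xor_of_indepFun {A B : Ω → Bool} (hA : Measurable A) (hB : Measurable B)
    (h : IndepFun A B μ) : cdiff μ (fun ω => xor (A ω) (B ω)) = cdiff μ A * cdiff μ B := by
  simp only [cdiff_eq_integral_boolSign, boolSign_xor]
  exact h.integral_comp_mul_comp (f := boolSign) (g := boolSign) hA.aemeasurable hB.aemeasurable
    .of_discrete .of_discrete

theorem cdiff_and_xor_and [IsProbabilityMeasure μ] {U V A B : Ω → Bool}
    (hU : Measurable U) (hV : Measurable V) (hA : Measurable A) (hB : Measurable B)
    (hU_VAB : IndepFun U (fun ω => (V ω, A ω, B ω)) μ)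
    (hV_AB : IndepFun V (fun ω => (A ω, B ω)) μ) (hAB : IndepFun A B μ)
    (hU0 : cdiff μ U = 0) (hV0 : cdiff μ V = 0) :
    cdiff μ (fun ω => xor (U ω && V ω) (xor (U ω) (A ω) && xor (V ω) (B ω)))
      = (1 + cdiff μ A) * (1 + cdiff μ B) / 4 := by
  set VAB := fun ω => (V ω, A ω, B ω)
  set AB := fun ω => (A ω, B ω)
  have hVABm : Measurable VAB := hV.prodMk (hA.prodMk hB)
  have hABm : Measurable AB := hA.prodMk hB
  let φ : Bool × Bool × Bool → ℝ := fun p => if p.2.2 then boolSign (p.2.1 && !p.1) else 0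
  let ψ : Bool × Bool → ℝ := fun p => if p.2 then 0 else if p.1 then 1 else 0
  let half : Bool → ℝ := fun b => (1 + boolSign b) / 2
  have hsplit : (fun ω => boolSign (xor (U ω && V ω) (xor (U ω) (A ω) && xor (V ω) (B ω))))
      = (boolSign ∘ U) * (φ ∘ VAB) + ((boolSign ∘ V) * (ψ ∘ AB) + (half ∘ A) * (half ∘ B)) := by
    funext ω
    exact boolSign_and_xor_and _ _ _ _
  calc cdiff μ _
      = μ[(boolSign ∘ U) * (φ ∘ VAB)]
          + (μ[(boolSign ∘ V) * (ψ ∘ AB)] + μ[(half ∘ A) * (half ∘ B)]) := by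
        have hUφ : Integrable ((boolSign ∘ U) * (φ ∘ VAB)) μ :=
          integrable_comp_of_finite (hU.prodMk hVABm) fun p => boolSign p.1 * φ p.2
        have hVψ : Integrable ((boolSign ∘ V) * (ψ ∘ AB)) μ :=
          integrable_comp_of_finite (hV.prodMk hABm) fun p => boolSign p.1 * ψ p.2
        have hhalf : Integrable ((half ∘ A) * (half ∘ B)) μ :=
          integrable_comp_of_finite hABm fun p => half p.1 * half p.2
        rw [cdiff_eq_integral_boolSign, hsplit, integral_add' hUφ (hVψ.add hhalf),
          integral_add' hVψ hhalf]
    _ = cdiff μ U * μ[φ ∘ VAB] + (cdiff μ V * μ[ψ ∘ AB]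
          + (∫ ω, (1 + boolSign (A ω)) / 2 ∂μ) * ∫ ω, (1 + boolSign (B ω)) / 2 ∂μ) := by
        rw [hU_VAB.integral_comp_mul_comp hU.aemeasurable hVABm.aemeasurable .of_discrete
            .of_discrete,
          hV_AB.integral_comp_mul_comp hV.aemeasurable hABm.aemeasurable .of_discrete
            .of_discrete,
          hAB.integral_comp_mul_comp hA.aemeasurable hB.aemeasurable .of_discrete .of_discrete]
        rfl
    _ = (1 + cdiff μ A) * (1 + cdiff μ B) / 4 := by
        rw [hU0, hV0, integral_one_add_boolSign_div_two hA, integral_one_add_boolSign_div_two hB]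
        ring

end

theorem continuous_difference_round_function {Ω : Type*} [MeasurableSpace Ω]
    (μ : Measure Ω) [IsProbabilityMeasure μ]
    (U V Da Db Dc Dy : Ω → Bool)
    (hU : Measurable U) (hV : Measurable V)
    (hDa : Measurable Da) (hDb : Measurable Db)
    (hDc : Measurable Dc) (hDy : Measurable Dy)
    (hindep : iIndepFun ![U, V, Da, Db, Dc, Dy] μ)
    (hUuni : ∀ bv : Bool, μ {ω | U ω = bv} = 1 / 2)
    (hVuni : ∀ bv : Bool, μ {ω | V ω = bv} = 1 / 2) :
    cdiff μ (fun ω =>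
        xor (xor (U ω && V ω) ((xor (U ω) (Da ω)) && (xor (V ω) (Db ω))))
          (xor (Dc ω) (Dy ω)))
      = (1 / 4) * (1 + cdiff μ Da + cdiff μ Db + cdiff μ Da * cdiff μ Db)
          * cdiff μ Dc * cdiff μ Dy := by
  have hX : ∀ i, Measurable (![U, V, Da, Db, Dc, Dy] i) := by
    intro i; fin_cases i <;> assumption
  have hAnd_CY : IndepFun (fun ω => xor (U ω && V ω) (xor (U ω) (Da ω) && xor (V ω) (Db ω)))
      (fun ω => xor (Dc ω) (Dy ω)) μ :=
    hindep.indepFun_comp_finset hX (S := {0, 1, 2, 3}) (T := {4, 5}) (by decide)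
      (fun x => xor (x ⟨0, by decide⟩ && x ⟨1, by decide⟩)
        (xor (x ⟨0, by decide⟩) (x ⟨2, by decide⟩) && xor (x ⟨1, by decide⟩) (x ⟨3, by decide⟩)))
      (fun x => xor (x ⟨4, by decide⟩) (x ⟨5, by decide⟩))
  have hU_VAB : IndepFun U (fun ω => (V ω, Da ω, Db ω)) μ :=
    hindep.indepFun_comp_finset hX (S := {0}) (T := {1, 2, 3}) (by decide)
      (fun x => x ⟨0, by decide⟩)
      (fun x => (x ⟨1, by decide⟩, x ⟨2, by decide⟩, x ⟨3, by decide⟩))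
  have hV_AB : IndepFun V (fun ω => (Da ω, Db ω)) μ :=
    (hindep.indepFun_prodMk hX 2 3 1 (by decide) (by decide)).symm
  rw [cdiff_xor_of_indepFun (by fun_prop) (by fun_prop) hAnd_CY,
    cdiff_xor_of_indepFun hDc hDy (hindep.indepFun (i := 4) (j := 5) (by decide)),
    cdiff_and_xor_and hU hV hDa hDb hU_VAB hV_AB (hindep.indepFun (i := 2) (j := 3) (by decide))
      (cdiff_eq_zero_of_uniform hU hUuni) (cdiff_eq_zero_of_uniform hV hVuni)]
  ring
end

section
/- Let n ≥ 1, d an integer with gcd(n, d) = 1, and λ ∈ F₂ⁿ with λ ≠ 1ⁿ. Define the sequence tmp₀ = λ and tmp_{k+1} = λ ∧ S^{d}(tmp_k) for k ≥ 0 (so tmp_k = ⋀_{j=0}^{k} S^{jd}(λ)). Then tmp_{n−1} = 0ⁿ; in particular, the bitwise AND of the n rotations ⋀_{k=0}^{n−1} S^{kd}(λ) equals the all-zeros vector 0ⁿ. -/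
/-- Circular left shift by an integer number `d` of bits:
`(rotZ n d x) i = x ((i + d) mod n)`. -/
def rotZ (n : ℕ) (d : ℤ) (x : Fin n → Bool) : Fin n → Bool :=
  fun i => x ⟨(((i.val : ℤ) + d) % (n : ℤ)).toNat, by
    have hn : (0 : ℤ) < (n : ℤ) := by exact_mod_cast i.pos
    have h1 := Int.emod_nonneg ((i.val : ℤ) + d) (by omega : (n : ℤ) ≠ 0)
    have h2 := Int.emod_lt_of_pos ((i.val : ℤ) + d) hn
    omega⟩

def fidx (n : ℕ) (hn : 0 < n) (m : ℤ) : Fin n :=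
  ⟨(m % (n : ℤ)).toNat, by
    have hn' : (0 : ℤ) < (n : ℤ) := by exact_mod_cast hn
    have h1 := Int.emod_nonneg m (by omega : (n : ℤ) ≠ 0)
    have h2 := Int.emod_lt_of_pos m hn'
    omega⟩

lemma fidx_congr (n : ℕ) (hn : 0 < n) {a b : ℤ} (h : a % (n : ℤ) = b % (n : ℤ)) :
    fidx n hn a = fidx n hn b := by
  simp [fidx, h]

lemma fidx_val (n : ℕ) (hn : 0 < n) (m : ℤ) :
    ((fidx n hn m : Fin n) : ℤ) = m % (n : ℤ) := by
  have hn' : (0 : ℤ) < (n : ℤ) := by exact_mod_cast hn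
  have h1 := Int.emod_nonneg m (by omega : (n : ℤ) ≠ 0)
  simp [fidx]
  omega

theorem simon_linear_tmp_terminates (n : ℕ) (hn : 1 ≤ n) (d : ℤ)
    (hgcd : Int.gcd (n : ℤ) d = 1)
    (lam : Fin n → Bool) (hlam : lam ≠ fun _ => true)
    (tmp : ℕ → Fin n → Bool)
    (h0 : tmp 0 = lam)
    (hstep : ∀ k, tmp (k + 1) = fun i => lam i && rotZ n d (tmp k) i) :
    tmp (n - 1) = (fun _ => false) ∧
      ∀ i : Fin n, ∃ k < n, rotZ n ((k : ℤ) * d) lam i = false := by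
  have hn0 : 0 < n := hn
  have hnZ : (0 : ℤ) < (n : ℤ) := by exact_mod_cast hn0
  -- fidx of an index is itself
  have hfself : ∀ i : Fin n, fidx n hn0 ((i : ℤ)) = i := by
    intro i
    apply Fin.ext
    have : ((i : ℤ)) % (n : ℤ) = (i : ℤ) := Int.emod_eq_of_lt (by positivity) (by exact_mod_cast i.isLt)
    simp [fidx, this]
  -- key characterization of tmp
  have key : ∀ k (i : Fin n), tmp k i = true ↔
      ∀ j : ℕ, j ≤ k → lam (fidx n hn0 ((i : ℤ) + (j : ℤ) * d)) = true := by
    intro k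
    induction k with
    | zero =>
      intro i
      constructor
      · intro h j hj
        interval_cases j
        simpa [hfself i] using (h0 ▸ h)
      · intro h
        have := h 0 le_rfl
        simpa [hfself i, h0] using this
    | succ k ih =>
      intro i
      have hRot : rotZ n d (tmp k) i = tmp k (fidx n hn0 ((i : ℤ) + d)) := by
        simp [rotZ, fidx]
      rw [hstep k]
      simp only [Bool.and_eq_true, hRot, ih]
      constructor
      · rintro ⟨hl, hrest⟩ j hj
        cases j with
        | zero => simpa [hfself i] using hl
        | succ j =>
          have := hrest j (by omega)
          convert this using 2
          apply fidx_congr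
          rw [fidx_val, Int.emod_add_emod]
          congr 1
          push_cast
          ring
      · intro h
        refine ⟨by simpa [hfself i] using h 0 (by omega), ?_⟩
        intro j hj
        have := h (j + 1) (by omega)
        convert this using 2
        apply fidx_congr
        rw [fidx_val, Int.emod_add_emod]
        congr 1
        push_cast
        ring
  -- existence of a zero position for lam
  obtain ⟨i0, hi0⟩ := Function.ne_iff.mp hlam
  have hi0' : lam i0 = false := by
    cases h : lam i0 with
    | false => rfl
    | true => exact absurd h hi0
  -- Bezout
  have hbez := Int.gcd_eq_gcd_ab (n : ℤ) d
  rw [hgcd] at hbez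
  -- for each i, find k < n hitting i0
  have hhit : ∀ i : Fin n, ∃ k : ℕ, k < n ∧
      fidx n hn0 ((i : ℤ) + (k : ℤ) * d) = i0 := by
    intro i
    set j0 : ℤ := ((i0 : ℤ) - (i : ℤ)) * Int.gcdB (n : ℤ) d with hj0
    have hbez' : (1 : ℤ) = (n : ℤ) * Int.gcdA (n : ℤ) d + d * Int.gcdB (n : ℤ) d := by
      exact_mod_cast hbez
    have hdb : (d : ℤ) * Int.gcdB (n : ℤ) d = 1 - (n : ℤ) * Int.gcdA (n : ℤ) d := by
      linarith
    have hk0 : ((i : ℤ) + j0 * d) ≡ (i0 : ℤ) [ZMOD (n : ℤ)] := by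
      apply (Int.modEq_iff_dvd.mpr)
      refine ⟨((i0 : ℤ) - (i : ℤ)) * Int.gcdA (n : ℤ) d, ?_⟩
      rw [hj0]
      linear_combination (-(((i0 : ℤ) - (i : ℤ)))) * hdb
    refine ⟨(j0 % (n : ℤ)).toNat, ?_, ?_⟩
    · have h2 := Int.emod_lt_of_pos j0 hnZ
      have h1 := Int.emod_nonneg j0 (by omega : (n : ℤ) ≠ 0)
      omega
    · have hcast : (((j0 % (n : ℤ)).toNat : ℤ)) = j0 % (n : ℤ) := by
        have h1 := Int.emod_nonneg j0 (by omega : (n : ℤ) ≠ 0)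
        omega
      have h1 : (j0 % (n : ℤ)) ≡ j0 [ZMOD (n : ℤ)] := Int.emod_emod_of_dvd j0 (dvd_refl _)
      have hmod : ((i : ℤ) + ((j0 % (n : ℤ)).toNat : ℤ) * d) % (n : ℤ) = (i0 : ℤ) % (n : ℤ) := by
        rw [hcast]
        exact ((h1.mul_right d).add_left ((i : ℤ))).trans hk0
      rw [← hfself i0]
      exact fidx_congr n hn0 hmod
  constructor
  · funext i
    obtain ⟨k, hk, hke⟩ := hhit i
    have hne : ¬ (tmp (n - 1) i = true) := by
      rw [key]
      push_neg
      exact ⟨k, by omega, by rw [hke]; simp [hi0']⟩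
    cases h : tmp (n - 1) i with
    | false => rfl
    | true => exact absurd h hne
  · intro i
    obtain ⟨k, hk, hke⟩ := hhit i
    refine ⟨k, hk, ?_⟩
    have : rotZ n ((k : ℤ) * d) lam i = lam (fidx n hn0 ((i : ℤ) + (k : ℤ) * d)) := by
      simp [rotZ, fidx]
    rw [this, hke, hi0']
end

section
/- (Feasibility necessity for positive linear correlation of the Simon-like round function) Let n ≥ 1 and let λ_out, λ_in ∈ F₂ⁿ. If ((S^{−a}(λ_out) ∨ S^{−b}(λ_out)) ⊕ λ_in) ∧ λ_in ≠ 0ⁿ, i.e., λ_in has an active bit at a position where both S^{−a}(λ_out) and S^{−b}(λ_out) are inactive, then the linear correlation of the AND map g(x) = Sᵃ(x) ∧ Sᵇ(x) with input mask λ_in and output mask λ_out is zero: 2^{−n} Σ_{x ∈ F₂ⁿ} (−1)^{λ_in·x ⊕ λ_out·g(x)} = 0. -/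
/-- Circular right shift by `t` bits: `(rotR n t x) i = x ((i - t) mod n)`. -/
def rotR (n t : ℕ) (x : Fin n → Bool) : Fin n → Bool :=
  fun i => x ⟨(i.val + (n - t % n)) % n, Nat.mod_lt _ i.pos⟩

/-- The inner product `Σ_i u_i v_i` over `F₂` of two `n`-bit vectors. -/
def dotB (n : ℕ) (u v : Fin n → Bool) : ZMod 2 :=
  ∑ i : Fin n, (if u i && v i then 1 else 0)

theorem ZMod.neg_one_pow_val_add_one {R : Type*} [Ring R] (e : ZMod 2) :
    (-1 : R) ^ (e + 1).val = -(-1) ^ e.val := by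
  fin_cases e
  · show (-1 : R) ^ 1 = -(-1) ^ 0
    simp
  · show (-1 : R) ^ 0 = -(-1) ^ 1
    simp

section FlipBit

variable {ι : Type*} [DecidableEq ι]

def flipBit (j : ι) (x : ι → Bool) : ι → Bool :=
  Function.update x j (!x j)

theorem flipBit_involutive (j : ι) : Function.Involutive (flipBit j) := by
  intro x
  simp [flipBit]

theorem flipBit_ne (j : ι) (x : ι → Bool) : flipBit j x ≠ x := fun h => by
  simpa [flipBit] using congrFun h j

end FlipBit

theorem rotL_rotR (n t : ℕ) (u : Fin n → Bool) : rotL n t (rotR n t u) = u := by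
  funext i
  simp only [rotL, rotR]
  congr 1
  ext
  have hmod : t % n < n := Nat.mod_lt _ i.pos
  have hsum : i + t + (n - t % n) = i + n * (t / n + 1) := by
    have := Nat.div_add_mod t n
    rw [Nat.mul_succ]
    omega
  show ((i + t) % n + (n - t % n)) % n = i
  rw [Nat.mod_add_mod, hsum, Nat.add_mul_mod_self_left, Nat.mod_eq_of_lt i.isLt]

theorem rotL_update_of_rotR_eq_false {n t : ℕ} {u x : Fin n → Bool} {i j : Fin n}
    (hj : rotR n t u j = false) (hi : u i = true) (c : Bool) :
    rotL n t (Function.update x j c) i = rotL n t x i := by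
  refine Function.update_of_ne (fun hij => ?_) c x
  have := congrFun (rotL_rotR n t u) i
  simp [rotL, hij, hj, hi] at this

theorem dotB_congr_right {n : ℕ} {u y y' : Fin n → Bool} (h : ∀ i, u i = true → y i = y' i) :
    dotB n u y = dotB n u y' :=
  Finset.sum_congr rfl fun i _ => by cases hu : u i <;> simp [hu, h i]

theorem dotB_flipBit_of_eq_true {n : ℕ} {u : Fin n → Bool} {j : Fin n} (hj : u j = true)
    (x : Fin n → Bool) : dotB n u (flipBit j x) = dotB n u x + 1 := by
  have hterm : ∀ i, (if u i && flipBit j x i then (1 : ZMod 2) else 0) =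
      (if u i && x i then 1 else 0) + if i = j then 1 else 0 := by
    intro i
    rcases eq_or_ne i j with rfl | hij
    · cases hx : x i <;> simp [flipBit, hj, hx]
      decide
    · simp [flipBit, hij]
  simp only [dotB, hterm, Finset.sum_add_distrib, Finset.sum_ite_eq', Finset.mem_univ, if_true]

theorem dotB_andRot_flipBit {n a b : ℕ} {u : Fin n → Bool} {j : Fin n}
    (ha : rotR n a u j = false) (hb : rotR n b u j = false) (x : Fin n → Bool) :
    dotB n u (fun i => rotL n a (flipBit j x) i && rotL n b (flipBit j x) i) =
      dotB n u (fun i => rotL n a x i && rotL n b x i) :=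
  dotB_congr_right fun _ hi => by
    rw [flipBit, rotL_update_of_rotR_eq_false ha hi, rotL_update_of_rotR_eq_false hb hi]

theorem exists_eq_true_and_eq_false_and_eq_false_of_ne {ι : Type*} {p q r : ι → Bool}
    (h : (fun i => xor (p i || q i) (r i) && r i) ≠ fun _ => false) :
    ∃ j, r j = true ∧ p j = false ∧ q j = false := by
  obtain ⟨j, hj⟩ := Function.ne_iff.mp h
  exact ⟨j, by revert hj; cases p j <;> cases q j <;> cases r j <;> decide⟩

theorem simon_linear_early_abort_general (n a b : ℕ)
    (lamOut lamIn : Fin n → Bool)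
    (g : (Fin n → Bool) → Fin n → Bool)
    (hg : ∀ x, g x = fun i => rotL n a x i && rotL n b x i)
    (hbad : (fun i => (xor (rotR n a lamOut i || rotR n b lamOut i) (lamIn i)) && lamIn i)
        ≠ (fun _ => false)) :
    (2 : ℝ) ^ (-(n : ℤ)) *
      ∑ x : Fin n → Bool,
        (-1 : ℝ) ^ ((dotB n lamIn x + dotB n lamOut (g x)).val) = 0 := by
  obtain ⟨j, hIn, ha, hb⟩ := exists_eq_true_and_eq_false_and_eq_false_of_ne hbad
  have hflip : ∀ x, dotB n lamIn (flipBit j x) + dotB n lamOut (g (flipBit j x)) =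
      dotB n lamIn x + dotB n lamOut (g x) + 1 := fun x => by
    rw [dotB_flipBit_of_eq_true hIn, hg, hg, dotB_andRot_flipBit ha hb]
    ring
  refine mul_eq_zero_of_right _ (Finset.sum_ninvolution (flipBit j) (fun x => ?_)
    (fun x _ => flipBit_ne j x) (fun _ => Finset.mem_univ _) (flipBit_involutive j))
  rw [hflip, ZMod.neg_one_pow_val_add_one, add_neg_cancel]

theorem simon_linear_early_abort (n a b : ℕ) (hn : 1 ≤ n)
    (lamOut lamIn : Fin n → Bool)
    (g : (Fin n → Bool) → Fin n → Bool)
    (hg : ∀ x, g x = fun i => rotL n a x i && rotL n b x i)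
    (hbad : (fun i => (xor (rotR n a lamOut i || rotR n b lamOut i) (lamIn i)) && lamIn i)
        ≠ (fun _ => false)) :
    (2 : ℝ) ^ (-(n : ℤ)) *
      ∑ x : Fin n → Bool,
        (-1 : ℝ) ^ ((dotB n lamIn x + dotB n lamOut (g x)).val) = 0 :=
  simon_linear_early_abort_general n a b lamOut lamIn g hg hbad
end
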